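/- If G is a connected graph in class W_2 with G ≠ K_2, then |B| < |N(B)| for every non-empty independent set B of G. -/

import Mathlib

/-!
Suppose `B` is a non-empty independent set with `|N(B)| ≤ |B|`. If `S` is a maximum independent
set disjoint from `B`, exchanging `S ∩ N(B)` for `B` in `S` keeps it independent, so
`|B| ≤ |S ∩ N(B)|`; hence `N(B) ⊆ S` for every such `S`. The `W₂` property supplies such an `S`
through any vertex `d ∉ B`, which forces `N(N(B)) ⊆ B`, so by connectivity `V = B ∪ N(B)` is a
bipartition. Two disjoint maximum independent sets separating two vertices of `B` would then form
a second bipartition, impossible in a connected graph; so `|B| = |N(B)| = 1` and `G = K₂`.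
-/

open Finset

/-- A finset of vertices is independent: no two of its members are adjacent. -/
def IndepSet {V : Type*} (G : SimpleGraph V) (A : Finset V) : Prop :=
  ∀ u ∈ A, ∀ v ∈ A, ¬ G.Adj u v

open scoped Classical in
/-- Maximum size of an independent set contained in `s` (independence number of `G[s]`). -/
noncomputable def alphaOn {V : Type*} [Fintype V] (G : SimpleGraph V) (s : Finset V) : ℕ :=
  ((s.powerset).filter (fun A => IndepSet G A)).sup Finset.card

/-- The independence number of `G`. -/
noncomputable def alpha {V : Type*} [Fintype V] (G : SimpleGraph V) : ℕ :=
  alphaOn G Finset.univ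

/-- The induced subgraph `G[s]` is well-covered: every maximal independent subset of `s`
has maximum cardinality. -/
def WellCoveredOn {V : Type*} [Fintype V] (G : SimpleGraph V) (s : Finset V) : Prop :=
  ∀ A ⊆ s, IndepSet G A →
    (∀ B ⊆ s, IndepSet G B → A ⊆ B → A = B) → A.card = alphaOn G s

/-- `G` is well-covered. -/
def WellCovered {V : Type*} [Fintype V] (G : SimpleGraph V) : Prop :=
  WellCoveredOn G Finset.univ

open scoped Classical in
/-- The open neighborhood `N(A)`: vertices having a neighbor in `A`. -/
noncomputable def nbhd {V : Type*} [Fintype V] (G : SimpleGraph V) (A : Finset V) : Finset V :=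
  Finset.univ.filter (fun v => ∃ u ∈ A, G.Adj u v)

/-- The closed neighborhood `N[A] = A ∪ N(A)`. -/
noncomputable def closedNbhd {V : Type*} [Fintype V] [DecidableEq V] (G : SimpleGraph V) (A : Finset V) :
    Finset V :=
  A ∪ nbhd G A

/-- The induced subgraph `G[s]` is in class `W₂`: every two disjoint independent subsets of `s`
extend to two disjoint maximum independent subsets of `s`. -/
def W2On {V : Type*} [Fintype V] (G : SimpleGraph V) (s : Finset V) : Prop :=
  ∀ A ⊆ s, ∀ B ⊆ s, IndepSet G A → IndepSet G B → Disjoint A B →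
    ∃ S₁ ⊆ s, ∃ S₂ ⊆ s, IndepSet G S₁ ∧ IndepSet G S₂ ∧
      S₁.card = alphaOn G s ∧ S₂.card = alphaOn G s ∧ Disjoint S₁ S₂ ∧ A ⊆ S₁ ∧ B ⊆ S₂

/-- `G` belongs to class `W₂`. -/
def W2 {V : Type*} [Fintype V] (G : SimpleGraph V) : Prop :=
  W2On G Finset.univ

namespace SimpleGraph

variable {V : Type*} {G : SimpleGraph V}

theorem Reachable.mem_of_forall_adj_mem {X : Set V} (hX : ∀ u ∈ X, ∀ v, G.Adj u v → v ∈ X)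
    {a b : V} (hab : G.Reachable a b) (ha : a ∈ X) : b ∈ X := by
  by_contra hb
  obtain ⟨w⟩ := hab
  obtain ⟨d, -, hd, hd'⟩ := w.exists_boundary_dart X ha hb
  exact hd' (hX _ hd _ d.adj)

/-- Two 2-colourings of a preconnected graph agree up to swapping the colours. -/
theorem Preconnected.mem_iff_mem_iff {B U : Set V} (hG : G.Preconnected)
    (hB : ∀ u v, G.Adj u v → (u ∈ B ↔ v ∉ B)) (hU : ∀ u v, G.Adj u v → (u ∈ U ↔ v ∉ U))
    (x y : V) : (x ∈ B ↔ x ∈ U) ↔ (y ∈ B ↔ y ∈ U) := by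
  have hX : ∀ u ∈ {v | v ∈ B ↔ v ∈ U}, ∀ v, G.Adj u v → v ∈ {v | v ∈ B ↔ v ∈ U} := by
    intro u (hu : u ∈ B ↔ u ∈ U) v huv
    have := hB u v huv
    have := hU u v huv
    show v ∈ B ↔ v ∈ U
    tauto
  exact ⟨(hG x y).mem_of_forall_adj_mem hX, (hG y x).mem_of_forall_adj_mem hX⟩

theorem nonempty_iso_top_fin_two [Fintype V] {b c : V} (hbc : G.Adj b c)
    (hV : ∀ v, v = b ∨ v = c) : Nonempty (G ≃g (⊤ : SimpleGraph (Fin 2))) := by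
  classical
  have hG : G = ⊤ := by
    ext u v
    rw [top_adj]
    refine ⟨G.ne_of_adj, fun huv => ?_⟩
    rcases hV u with rfl | rfl <;> rcases hV v with rfl | rfl
    exacts [absurd rfl huv, hbc, hbc.symm, absurd rfl huv]
  have hcard : Fintype.card V = 2 := by
    rw [← card_univ, show (univ : Finset V) = {b, c} by ext v; simpa using hV v]
    exact card_pair hbc.ne
  subst hG
  exact ⟨Iso.completeGraph (Fintype.equivFinOfCardEq hcard)⟩

end SimpleGraph

section IndepSet

variable {V : Type*} {G : SimpleGraph V}

theorem IndepSet.mono {A B : Finset V} (hB : IndepSet G B) (hAB : A ⊆ B) : IndepSet G A :=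
  fun u hu v hv => hB u (hAB hu) v (hAB hv)

theorem indepSet_empty : IndepSet G ∅ := by
  simp [IndepSet]

theorem indepSet_singleton (v : V) : IndepSet G {v} := by
  simp [IndepSet]

end IndepSet

section Fintype

variable {V : Type*} [Fintype V] {G : SimpleGraph V}

theorem IndepSet.card_le_alpha {A : Finset V} (hA : IndepSet G A) : A.card ≤ alpha G := by
  classical
  exact le_sup (f := card) (by simpa using hA)

@[simp]
theorem mem_nbhd {A : Finset V} {v : V} : v ∈ nbhd G A ↔ ∃ u ∈ A, G.Adj u v := by
  simp [nbhd]

theorem IndepSet.sdiff_nbhd_union [DecidableEq V] {A S : Finset V} (hA : IndepSet G A)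
    (hS : IndepSet G S) : IndepSet G (S \ nbhd G A ∪ A) := by
  intro u hu v hv huv
  simp only [mem_union, mem_sdiff, mem_nbhd, not_exists, not_and] at hu hv
  rcases hu with ⟨huS, huN⟩ | huA <;> rcases hv with ⟨hvS, hvN⟩ | hvA
  exacts [hS u huS v hvS huv, huN v hvA huv.symm, hvN u huA huv, hA u huA v hvA huv]

theorem card_le_card_inter_nbhd [DecidableEq V] {A S : Finset V} (hA : IndepSet G A)
    (hS : IndepSet G S) (hAS : Disjoint A S) (hSα : S.card = alpha G) :
    A.card ≤ (S ∩ nbhd G A).card := by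
  have hswap := (hA.sdiff_nbhd_union hS).card_le_alpha
  rw [card_union_of_disjoint (disjoint_of_subset_left sdiff_subset hAS.symm)] at hswap
  have := card_inter_add_card_sdiff S (nbhd G A)
  omega

theorem nbhd_subset_of_card_nbhd_le {A S : Finset V} (hA : IndepSet G A) (hS : IndepSet G S)
    (hAS : Disjoint A S) (hSα : S.card = alpha G) (hle : (nbhd G A).card ≤ A.card) :
    nbhd G A ⊆ S := by
  classical
  refine inter_eq_right.1 (eq_of_subset_of_card_le inter_subset_right ?_)
  exact hle.trans (card_le_card_inter_nbhd hA hS hAS hSα)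

theorem IndepSet.mem_iff_notMem_of_adj [DecidableEq V] {B C : Finset V} (hB : IndepSet G B)
    (hC : IndepSet G C) (hBC : B ∪ C = univ) {u v : V} (huv : G.Adj u v) :
    u ∈ (B : Set V) ↔ v ∉ (B : Set V) := by
  have hu : u ∈ B ∪ C := hBC ▸ mem_univ u
  have hv : v ∈ B ∪ C := hBC ▸ mem_univ v
  simp only [mem_coe]
  rw [mem_union] at hu hv
  constructor
  · exact fun hu hv => hB u hu v hv huv
  · intro hvB
    by_contra huB
    exact hC u (hu.resolve_left huB) v (hv.resolve_left hvB) huv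

theorem union_nbhd_eq_univ [DecidableEq V] {B : Finset V} (hG : G.Preconnected)
    (hB : B.Nonempty) (hBB : nbhd G (nbhd G B) ⊆ B) : B ∪ nbhd G B = univ := by
  obtain ⟨b, hb⟩ := hB
  have hX : ∀ u ∈ ((B ∪ nbhd G B : Finset V) : Set V), ∀ v, G.Adj u v →
      v ∈ ((B ∪ nbhd G B : Finset V) : Set V) := by
    intro u hu v huv
    simp only [coe_union, Set.mem_union, mem_coe] at hu ⊢
    rcases hu with hu | hu
    · exact Or.inr (mem_nbhd.2 ⟨u, hu, huv⟩)
    · exact Or.inl (hBB (mem_nbhd.2 ⟨u, hu, huv⟩))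
  exact eq_univ_of_forall fun v => (hG b v).mem_of_forall_adj_mem hX (by simp [hb])

namespace W2

theorem exists_maximum_disjoint (h : W2 G) {A B : Finset V} (hA : IndepSet G A)
    (hB : IndepSet G B) (hAB : Disjoint A B) :
    ∃ S, IndepSet G S ∧ S.card = alpha G ∧ A ⊆ S ∧ Disjoint B S := by
  obtain ⟨S, -, T, -, hS, -, hSα, -, hST, hAS, hBT⟩ :=
    h A (subset_univ _) B (subset_univ _) hA hB hAB
  exact ⟨S, hS, hSα, hAS, disjoint_of_subset_left hBT hST.symm⟩

theorem nbhd_nbhd_subset (h : W2 G) {B : Finset V} (hB : IndepSet G B)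
    (hle : (nbhd G B).card ≤ B.card) : nbhd G (nbhd G B) ⊆ B := by
  intro d hd
  by_contra hdB
  obtain ⟨T, hT, hTα, hdT, hBT⟩ :=
    h.exists_maximum_disjoint (indepSet_singleton d) hB (disjoint_singleton_left.2 hdB)
  obtain ⟨c, hc, hcd⟩ := mem_nbhd.1 hd
  exact hT c (nbhd_subset_of_card_nbhd_le hB hT hBT hTα hle hc) d (hdT (mem_singleton_self d)) hcd

theorem card_le_one_of_union_eq_univ [DecidableEq V] (h : W2 G) (hG : G.Preconnected)
    {B C : Finset V} (hB : IndepSet G B) (hC : IndepSet G C) (hBC : B ∪ C = univ) :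
    B.card ≤ 1 := by
  by_contra! hB2
  obtain ⟨b₁, hb₁, b₂, hb₂, hne⟩ := one_lt_card.1 hB2
  obtain ⟨U₁, -, U₂, -, hU₁, hU₂, hU₁α, hU₂α, hU, hbU₁, hbU₂⟩ :=
    h {b₁} (subset_univ _) {b₂} (subset_univ _) (indepSet_singleton b₁) (indepSet_singleton b₂)
      (disjoint_singleton.2 hne)
  have hcover : U₁ ∪ U₂ = univ := by
    refine eq_of_subset_of_card_le (subset_univ _) ?_
    have : U₁.card = alpha G := hU₁α
    have : U₂.card = alpha G := hU₂α
    have := hB.card_le_alpha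
    have := hC.card_le_alpha
    have := card_union_le B C
    rw [card_union_of_disjoint hU, ← hBC]
    omega
  have key := hG.mem_iff_mem_iff (fun _ _ => hB.mem_iff_notMem_of_adj hC hBC)
    (fun _ _ => hU₁.mem_iff_notMem_of_adj hU₂ hcover) b₁ b₂
  have hb₂U₁ : b₂ ∉ U₁ := disjoint_right.1 hU (hbU₂ (mem_singleton_self b₂))
  simp [hb₁, hb₂, hbU₁ (mem_singleton_self b₁), hb₂U₁] at key

end W2

end Fintype

/-- In a connected W₂ graph other than K₂, |B| < |N(B)| for every non-empty independent
set B. -/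
theorem stmt10 {V : Type*} [Fintype V] (G : SimpleGraph V)
    (hconn : G.Connected) (hK2 : ¬ Nonempty (G ≃g (⊤ : SimpleGraph (Fin 2))))
    (h : W2 G) :
    ∀ B : Finset V, IndepSet G B → B.Nonempty → B.card < (nbhd G B).card := by
  classical
  intro B hB hBne
  by_contra! hle
  obtain ⟨S, hS, hSα, -, hBS⟩ :=
    h.exists_maximum_disjoint indepSet_empty hB (disjoint_empty_left _)
  have hBC := (card_le_card_inter_nbhd hB hS hBS hSα).trans (card_le_card inter_subset_right)
  have hcover := union_nbhd_eq_univ hconn.preconnected hBne (h.nbhd_nbhd_subset hB hle)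
  have hC := hS.mono (nbhd_subset_of_card_nbhd_le hB hS hBS hSα hle)
  have hB1 : B.card = 1 :=
    (h.card_le_one_of_union_eq_univ hconn.preconnected hB hC hcover).antisymm hBne.card_pos
  obtain ⟨b, rfl⟩ := card_eq_one.1 hB1
  obtain ⟨c, hc⟩ := card_eq_one.1 (show (nbhd G {b}).card = 1 by omega)
  have hbc : G.Adj b c := by simpa using (hc ▸ mem_singleton_self c : c ∈ nbhd G {b})
  refine hK2 (SimpleGraph.nonempty_iso_top_fin_two hbc fun v => ?_)
  have hv : v ∈ {b} ∪ nbhd G {b} := hcover ▸ mem_univ v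
  simpa [hc] using hv
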